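/- arXiv:2003.09923 — 5 statements merged into one kernel-verified Lean document; each statement's English description precedes it below -/
import Mathlib

section
/- Let M ≥ 2 and let λ_1, …, λ_M be positive real numbers such that λ_i ≠ λ_j for at least one pair of indices i ≠ j. Then for every real α ≥ 0, ∑_{1 ≤ j < i ≤ M} λ_i λ_j (λ_i − λ_j)^2 / ((λ_i+α)^3 (λ_j+α)^3) > 0; consequently (∑_{m=1}^M λ_m/(λ_m+α)^3)·(∑_{m=1}^M λ_m^2/(λ_m+α)^2) − (∑_{m=1}^M λ_m^2/(λ_m+α)^3)·(∑_{m=1}^M λ_m/(λ_m+α)^2) > 0. -/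
open Finset

/-! Pairing the terms `(i, j)` and `(j, i)` of the expanded product of sums turns the difference
into `∑_{j < i} λᵢ λⱼ (λᵢ - λⱼ)² / ((λᵢ + α)³ (λⱼ + α)³)`: the cross terms of a pair add up to
`λᵢ λⱼ (λⱼ - λᵢ) ((λⱼ + α) - (λᵢ + α)) / ((λᵢ + α)³ (λⱼ + α)³)`, and the diagonal terms vanish.
Every summand is nonnegative and the one for a pair with `λᵢ ≠ λⱼ` is positive. -/

namespace Finset

variable {ι M : Type*} [Fintype ι] [LinearOrder ι]

theorem sum_sum_eq_sum_sum_filter_lt_add_sum_diag [AddCommMonoid M] (g : ι → ι → M) :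
    ∑ i, ∑ j, g i j = ∑ i, ∑ j ∈ univ.filter (fun j => j < i), (g i j + g j i) + ∑ i, g i i := by
  have hsplit : ∀ i j, g i j = (if j < i then g i j else 0) + (if i < j then g i j else 0)
      + (if i = j then g i j else 0) := by
    intro i j
    rcases lt_trichotomy i j with h | rfl | h
    · simp [h, h.ne, h.not_gt]
    · simp
    · simp [h, h.ne', h.not_gt]
  have hupper : ∑ i, ∑ j, (if i < j then g i j else 0)
      = ∑ i, ∑ j, (if j < i then g j i else 0) := sum_comm
  simp only [sum_filter, sum_add_distrib]
  conv_lhs => enter [2, i, 2, j]; rw [hsplit i j]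
  simp only [sum_add_distrib, sum_ite_eq, mem_univ, if_true, hupper]

theorem sum_sum_filter_lt_pos [AddCommMonoid M] [PartialOrder M] [IsOrderedCancelAddMonoid M]
    {P : ι → ι → M} (hP : ∀ i j, 0 ≤ P i j) (hpos : ∃ i j, j < i ∧ 0 < P i j) :
    0 < ∑ i, ∑ j ∈ univ.filter (fun j => j < i), P i j := by
  obtain ⟨i, j, hji, hij⟩ := hpos
  exact sum_pos' (fun i _ => sum_nonneg fun j _ => hP i j)
    ⟨i, mem_univ i, sum_pos' (fun j _ => hP i j) ⟨j, by simpa using hji, hij⟩⟩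

end Finset

noncomputable def rzfCrossTerm (α a b : ℝ) : ℝ :=
  a / (a + α) ^ 3 * (b ^ 2 / (b + α) ^ 2) - a ^ 2 / (a + α) ^ 3 * (b / (b + α) ^ 2)

noncomputable def rzfPairTerm (α a b : ℝ) : ℝ := a * b * (a - b) ^ 2 / ((a + α) ^ 3 * (b + α) ^ 3)

theorem rzfCrossTerm_self (α a : ℝ) : rzfCrossTerm α a a = 0 := by
  unfold rzfCrossTerm; ring

theorem rzfCrossTerm_add_swap {α a b : ℝ} (ha : a + α ≠ 0) (hb : b + α ≠ 0) :
    rzfCrossTerm α a b + rzfCrossTerm α b a = rzfPairTerm α a b := by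
  unfold rzfCrossTerm rzfPairTerm
  field_simp
  ring

theorem rzfPairTerm_nonneg {α a b : ℝ} (hα : 0 ≤ α) (ha : 0 < a) (hb : 0 < b) :
    0 ≤ rzfPairTerm α a b := by
  unfold rzfPairTerm; positivity

theorem rzfPairTerm_pos {α a b : ℝ} (hα : 0 ≤ α) (ha : 0 < a) (hb : 0 < b) (hab : a ≠ b) :
    0 < rzfPairTerm α a b := by
  have : 0 < (a - b) ^ 2 := pow_two_pos_of_ne_zero (sub_ne_zero.2 hab)
  unfold rzfPairTerm; positivity

theorem sum_mul_sum_sub_sum_mul_sum_eq_sum_sum_rzfCrossTerm {ι : Type*} (s : Finset ι)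
    (lam : ι → ℝ) (α : ℝ) :
    (∑ m ∈ s, lam m / (lam m + α) ^ 3) * (∑ m ∈ s, lam m ^ 2 / (lam m + α) ^ 2)
      - (∑ m ∈ s, lam m ^ 2 / (lam m + α) ^ 3) * (∑ m ∈ s, lam m / (lam m + α) ^ 2)
      = ∑ i ∈ s, ∑ j ∈ s, rzfCrossTerm α (lam i) (lam j) := by
  simp only [sum_mul_sum, ← sum_sub_distrib, rzfCrossTerm]

theorem rzf_sum_pos_general (M : ℕ) (lam : Fin M → ℝ)
    (hlam : ∀ m, 0 < lam m)
    (hne : ∃ i j, i ≠ j ∧ lam i ≠ lam j) (α : ℝ) (hα : 0 ≤ α) :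
    0 < ∑ i, ∑ j ∈ Finset.univ.filter (fun j => j < i),
        lam i * lam j * (lam i - lam j) ^ 2
          / ((lam i + α) ^ 3 * (lam j + α) ^ 3) ∧
    0 < (∑ m, lam m / (lam m + α) ^ 3) * (∑ m, (lam m) ^ 2 / (lam m + α) ^ 2)
      - (∑ m, (lam m) ^ 2 / (lam m + α) ^ 3) * (∑ m, lam m / (lam m + α) ^ 2) := by
  have hshift : ∀ m, lam m + α ≠ 0 := fun m => by linarith [hlam m]
  have hpos : 0 < ∑ i, ∑ j ∈ univ.filter (fun j => j < i), rzfPairTerm α (lam i) (lam j) := by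
    refine sum_sum_filter_lt_pos (fun i j => rzfPairTerm_nonneg hα (hlam i) (hlam j)) ?_
    obtain ⟨i, j, hij, hlam_ij⟩ := hne
    rcases hij.lt_or_gt with h | h
    · exact ⟨j, i, h, rzfPairTerm_pos hα (hlam j) (hlam i) hlam_ij.symm⟩
    · exact ⟨i, j, h, rzfPairTerm_pos hα (hlam i) (hlam j) hlam_ij⟩
  have hdiff : (∑ m, lam m / (lam m + α) ^ 3) * (∑ m, (lam m) ^ 2 / (lam m + α) ^ 2)
      - (∑ m, (lam m) ^ 2 / (lam m + α) ^ 3) * (∑ m, lam m / (lam m + α) ^ 2)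
      = ∑ i, ∑ j ∈ univ.filter (fun j => j < i), rzfPairTerm α (lam i) (lam j) := by
    simp only [sum_mul_sum_sub_sum_mul_sum_eq_sum_sum_rzfCrossTerm,
      sum_sum_eq_sum_sum_filter_lt_add_sum_diag, rzfCrossTerm_self, sum_const_zero, add_zero,
      rzfCrossTerm_add_swap (hshift _) (hshift _)]
  exact ⟨hpos, hdiff ▸ hpos⟩

/-- positivity of the pair sum and of the cross-term difference
when the eigenvalues are not all equal. -/
theorem rzf_sum_pos (M : ℕ) (hM : 2 ≤ M) (lam : Fin M → ℝ)
    (hlam : ∀ m, 0 < lam m)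
    (hne : ∃ i j, i ≠ j ∧ lam i ≠ lam j) (α : ℝ) (hα : 0 ≤ α) :
    0 < ∑ i, ∑ j ∈ Finset.univ.filter (fun j => j < i),
        lam i * lam j * (lam i - lam j) ^ 2
          / ((lam i + α) ^ 3 * (lam j + α) ^ 3) ∧
    0 < (∑ m, lam m / (lam m + α) ^ 3) * (∑ m, (lam m) ^ 2 / (lam m + α) ^ 2)
      - (∑ m, (lam m) ^ 2 / (lam m + α) ^ 3) * (∑ m, lam m / (lam m + α) ^ 2) :=
  rzf_sum_pos_general M lam hlam hne α hα
end

section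
/- Let M ≥ 2 and let λ_1, …, λ_M be positive real numbers, not all equal, and define f(α) = (∑_{m=1}^M λ_m^2/(λ_m+α)^2) / (∑_{m=1}^M λ_m/(λ_m+α)^2). Then f is strictly monotonically increasing on [0, ∞): for all 0 ≤ α_1 < α_2 one has f(α_1) < f(α_2). -/
/-!
`f(α)` is the mean of the `λ_m` under the weights `λ_m / (λ_m + α)²`. Raising `α` from `α₁` to
`α₂` multiplies these weights by `((λ_m + α₁) / (λ_m + α₂))²`, a strictly increasing function of
`λ_m`, so mass moves towards the larger eigenvalues and the mean goes up. Quantitatively this is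
the weighted Chebyshev sum inequality, which is strict as soon as the `λ_m` are not all equal.
-/

open Finset

/-- The eigenvalue functional appearing in the average SNR of RZF beamforming. -/
noncomputable def rzfSnrRatio (M : ℕ) (lam : Fin M → ℝ) (α : ℝ) : ℝ :=
  (∑ m, (lam m) ^ 2 / (lam m + α) ^ 2) / (∑ m, lam m / (lam m + α) ^ 2)

section StrictMonoOn

variable {R : Type*} [Ring R] [LinearOrder R] [IsStrictOrderedRing R] {s : Set R} {g : R → R}

theorem StrictMonoOn.sub_mul_sub_pos (hg : StrictMonoOn g s)
    {a b : R} (ha : a ∈ s) (hb : b ∈ s) (hab : a ≠ b) : 0 < (a - b) * (g a - g b) := by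
  rcases hab.lt_or_gt with h | h
  · exact mul_pos_of_neg_of_neg (sub_neg.2 h) (sub_neg.2 (hg ha hb h))
  · exact mul_pos (sub_pos.2 h) (sub_pos.2 (hg hb ha h))

theorem StrictMonoOn.sub_mul_sub_nonneg (hg : StrictMonoOn g s)
    {a b : R} (ha : a ∈ s) (hb : b ∈ s) : 0 ≤ (a - b) * (g a - g b) := by
  rcases eq_or_ne a b with rfl | hab
  · simp
  · exact (hg.sub_mul_sub_pos ha hb hab).le

end StrictMonoOn

section WeightedChebyshev

variable {ι : Type*} [Fintype ι] (w x y : ι → ℝ)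

theorem two_mul_sum_mul_sum_sub_sum_mul_sum :
    2 * ((∑ i, w i * y i * x i) * (∑ i, w i) - (∑ i, w i * x i) * ∑ i, w i * y i) =
      ∑ i, ∑ j, w i * w j * ((x i - x j) * (y i - y j)) := by
  have hexpand : ∀ i j, w i * w j * ((x i - x j) * (y i - y j)) =
      w i * y i * x i * w j + w i * (w j * y j * x j) - w i * x i * (w j * y j) -
        w i * y i * (w j * x j) := fun i j => by ring
  simp only [hexpand, sum_add_distrib, sum_sub_distrib, ← sum_mul_sum]
  ring

variable {w x y}

theorem sum_mul_sum_lt_sum_mul_sum_of_sub_mul_sub (hw : ∀ i, 0 < w i)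
    (hmono : ∀ i j, 0 ≤ (x i - x j) * (y i - y j))
    (hstrict : ∃ i j, 0 < (x i - x j) * (y i - y j)) :
    (∑ i, w i * x i) * (∑ i, w i * y i) < (∑ i, w i * y i * x i) * ∑ i, w i := by
  obtain ⟨i, j, hij⟩ := hstrict
  have hterm : ∀ i j, 0 ≤ w i * w j * ((x i - x j) * (y i - y j)) := fun i j =>
    mul_nonneg (mul_pos (hw i) (hw j)).le (hmono i j)
  have hpos : 0 < ∑ i, ∑ j, w i * w j * ((x i - x j) * (y i - y j)) :=
    sum_pos' (fun i _ => sum_nonneg fun j _ => hterm i j)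
      ⟨i, mem_univ i, sum_pos' (fun j _ => hterm i j)
        ⟨j, mem_univ j, mul_pos (mul_pos (hw i) (hw j)) hij⟩⟩
  linarith [two_mul_sum_mul_sum_sub_sum_mul_sum w x y]

end WeightedChebyshev

theorem sum_mul_div_sum_lt_of_strictMonoOn {ι : Type*} [Fintype ι] {w x : ι → ℝ}
    {s : Set ℝ} {g : ℝ → ℝ} (hg : StrictMonoOn g s) (hw : ∀ i, 0 < w i)
    (hxs : ∀ i, x i ∈ s) (hgpos : ∀ i, 0 < g (x i)) (hx : ∃ i j, x i ≠ x j) :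
    (∑ i, w i * x i) / ∑ i, w i < (∑ i, w i * g (x i) * x i) / ∑ i, w i * g (x i) := by
  obtain ⟨i, j, hij⟩ := hx
  have : Nonempty ι := ⟨i⟩
  rw [div_lt_div_iff₀ (sum_pos (fun i _ => hw i) univ_nonempty)
    (sum_pos (fun i _ => mul_pos (hw i) (hgpos i)) univ_nonempty)]
  exact sum_mul_sum_lt_sum_mul_sum_of_sub_mul_sub hw
    (fun i j => hg.sub_mul_sub_nonneg (hxs i) (hxs j))
    ⟨i, j, hg.sub_mul_sub_pos (hxs i) (hxs j) hij⟩

theorem strictMonoOn_div_add_sq {α₁ α₂ : ℝ} (h₁ : 0 ≤ α₁) (h₁₂ : α₁ < α₂) :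
    StrictMonoOn (fun t => ((t + α₁) / (t + α₂)) ^ 2) (Set.Ioi 0) := by
  intro a (ha : 0 < a) b (hb : 0 < b) hab
  have hdiv : (a + α₁) / (a + α₂) < (b + α₁) / (b + α₂) := by
    rw [div_lt_div_iff₀ (by linarith) (by linarith)]
    nlinarith
  exact pow_lt_pow_left₀ hdiv (div_pos (by linarith) (by linarith)).le two_ne_zero

theorem rzfSnrRatio_eq_div (M : ℕ) (lam : Fin M → ℝ) (α : ℝ) :
    rzfSnrRatio M lam α =
      (∑ m, lam m / (lam m + α) ^ 2 * lam m) / ∑ m, lam m / (lam m + α) ^ 2 := by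
  simp only [rzfSnrRatio, div_mul_eq_mul_div, sq]

theorem rzf_snr_strictMono_general (M : ℕ) (lam : Fin M → ℝ)
    (hlam : ∀ m, 0 < lam m) (hne : ∃ i j, lam i ≠ lam j) :
    ∀ α₁ α₂ : ℝ, 0 ≤ α₁ → α₁ < α₂ →
      rzfSnrRatio M lam α₁ < rzfSnrRatio M lam α₂ := by
  intro α₁ α₂ h₁ h₁₂
  have hshift : ∀ m, ∀ α ≥ α₁, 0 < lam m + α := fun m α hα => by linarith [hlam m]
  have hweight : ∀ m, lam m / (lam m + α₂) ^ 2 =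
      lam m / (lam m + α₁) ^ 2 * ((lam m + α₁) / (lam m + α₂)) ^ 2 := fun m => by
    field_simp [(hshift m α₁ le_rfl).ne', (hshift m α₂ h₁₂.le).ne']
  rw [rzfSnrRatio_eq_div, rzfSnrRatio_eq_div]
  simp only [hweight]
  exact sum_mul_div_sum_lt_of_strictMonoOn (strictMonoOn_div_add_sq h₁ h₁₂)
    (fun m => div_pos (hlam m) (pow_pos (hshift m α₁ le_rfl) 2)) hlam
    (fun m => pow_pos (div_pos (hshift m α₁ le_rfl) (hshift m α₂ h₁₂.le)) 2) hne

/-- the functional is strictly increasing on `[0, ∞)` when the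
eigenvalues are not all equal. -/
theorem rzf_snr_strictMono (M : ℕ) (hM : 2 ≤ M) (lam : Fin M → ℝ)
    (hlam : ∀ m, 0 < lam m) (hne : ∃ i j, lam i ≠ lam j) :
    ∀ α₁ α₂ : ℝ, 0 ≤ α₁ → α₁ < α₂ →
      rzfSnrRatio M lam α₁ < rzfSnrRatio M lam α₂ :=
  rzf_snr_strictMono_general M lam hlam hne
end

section
/- Let M ≥ 2 and let λ_1, …, λ_M be positive real numbers, not all equal, and define f(α) = (∑_{m=1}^M λ_m^2/(λ_m+α)^2) / (∑_{m=1}^M λ_m/(λ_m+α)^2). Then for every finite α ≥ 0 one has f(α) < (∑_{m=1}^M λ_m^2) / (∑_{m=1}^M λ_m); that is, the matched-filter limit strictly dominates every finite regularization value. -/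
/-!
With weights `p m = λ_m` the claim is a strict weighted Chebyshev inequality
`(∑ p) (∑ p λ w) < (∑ p λ) (∑ p w)` for `w m = (λ_m + α)⁻²`, a sequence ordered
oppositely to `λ`. The gap between the two sides is half of
`∑_{i,j} p_i p_j (λ_i - λ_j) (w_j - w_i)`, a sum of nonnegative terms that is positive
as soon as two of the `λ_m` differ.
-/

open Finset

namespace Finset

variable {ι : Type*} (s : Finset ι) (p f g : ι → ℝ)

theorem two_mul_sum_mul_sum_sub_sum_mul_sum :
    2 * ((∑ i ∈ s, p i * f i) * (∑ i ∈ s, p i * g i)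
        - (∑ i ∈ s, p i) * (∑ i ∈ s, p i * f i * g i))
      = ∑ i ∈ s, ∑ j ∈ s, p i * p j * ((f i - f j) * (g j - g i)) := by
  have hexpand : ∑ i ∈ s, ∑ j ∈ s, p i * p j * ((f i - f j) * (g j - g i))
      = (∑ i ∈ s, p i * f i) * (∑ i ∈ s, p i * g i) - (∑ i ∈ s, p i * f i * g i) * (∑ i ∈ s, p i)
        - (∑ i ∈ s, p i) * (∑ i ∈ s, p i * f i * g i) + (∑ i ∈ s, p i * g i) * (∑ i ∈ s, p i * f i) := by
    simp only [sum_mul_sum, ← sum_sub_distrib, ← sum_add_distrib]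
    exact sum_congr rfl fun i _ => sum_congr rfl fun j _ => by ring
  rw [hexpand]
  ring

variable {s p f g}

theorem sum_mul_sum_mul_lt_of_strictAntivary (hp : ∀ i ∈ s, 0 < p i)
    (hfg : ∀ i ∈ s, ∀ j ∈ s, f i ≠ f j → 0 < (f i - f j) * (g j - g i))
    (hf : ∃ i ∈ s, ∃ j ∈ s, f i ≠ f j) :
    (∑ i ∈ s, p i) * (∑ i ∈ s, p i * f i * g i) < (∑ i ∈ s, p i * f i) * (∑ i ∈ s, p i * g i) := by
  have hterm : ∀ i ∈ s, ∀ j ∈ s, 0 ≤ p i * p j * ((f i - f j) * (g j - g i)) := by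
    intro i hi j hj
    refine mul_nonneg (mul_pos (hp i hi) (hp j hj)).le ?_
    by_cases hij : f i = f j
    · simp [hij]
    · exact (hfg i hi j hj hij).le
  obtain ⟨i, hi, j, hj, hij⟩ := hf
  have hgap : 0 < ∑ i ∈ s, ∑ j ∈ s, p i * p j * ((f i - f j) * (g j - g i)) :=
    sum_pos' (fun i hi => sum_nonneg (hterm i hi)) ⟨i, hi,
      sum_pos' (hterm i hi) ⟨j, hj, mul_pos (mul_pos (hp i hi) (hp j hj)) (hfg i hi j hj hij)⟩⟩
  linarith [two_mul_sum_mul_sum_sub_sum_mul_sum s p f g]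

end Finset

theorem StrictAntiOn.sub_mul_sub_pos {S : Set ℝ} {φ : ℝ → ℝ} (hφ : StrictAntiOn φ S) {x y : ℝ}
    (hx : x ∈ S) (hy : y ∈ S) (hxy : x ≠ y) : 0 < (x - y) * (φ y - φ x) := by
  rcases hxy.lt_or_gt with h | h
  · exact mul_pos_of_neg_of_neg (sub_neg.2 h) (sub_neg.2 (hφ hx hy h))
  · exact mul_pos (sub_pos.2 h) (sub_pos.2 (hφ hy hx h))

theorem strictAntiOn_inv_add_sq {α : ℝ} (hα : 0 ≤ α) :
    StrictAntiOn (fun x : ℝ => ((x + α) ^ 2)⁻¹) (Set.Ioi 0) := by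
  intro x (hx : 0 < x) y _ hxy
  dsimp only
  gcongr

theorem rzf_snr_lt_mf_general (M : ℕ) (lam : Fin M → ℝ)
    (hlam : ∀ m, 0 < lam m) (hne : ∃ i j, lam i ≠ lam j) :
    ∀ α : ℝ, 0 ≤ α →
      rzfSnrRatio M lam α < (∑ m, (lam m) ^ 2) / (∑ m, lam m) := by
  intro α hα
  obtain ⟨i, j, hij⟩ := hne
  have hsum : 0 < ∑ m, lam m := sum_pos (fun m _ => hlam m) ⟨i, mem_univ i⟩
  have hwsum : 0 < ∑ m, lam m / (lam m + α) ^ 2 :=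
    sum_pos (fun m _ => have := hlam m; by positivity) ⟨i, mem_univ i⟩
  have key := sum_mul_sum_mul_lt_of_strictAntivary (s := univ) (p := lam) (f := lam)
    (g := fun m => ((lam m + α) ^ 2)⁻¹) (fun m _ => hlam m)
    (fun m _ n _ hmn => (strictAntiOn_inv_add_sq hα).sub_mul_sub_pos (hlam m) (hlam n) hmn)
    ⟨i, mem_univ i, j, mem_univ j, hij⟩
  rw [rzfSnrRatio, div_lt_div_iff₀ hwsum hsum]
  simpa only [div_eq_mul_inv, sq, mul_comm (∑ m, lam m)] using key

/-- every finite regularization value is strictly dominated by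
the matched-filter limit. -/
theorem rzf_snr_lt_mf (M : ℕ) (hM : 2 ≤ M) (lam : Fin M → ℝ)
    (hlam : ∀ m, 0 < lam m) (hne : ∃ i j, lam i ≠ lam j) :
    ∀ α : ℝ, 0 ≤ α →
      rzfSnrRatio M lam α < (∑ m, (lam m) ^ 2) / (∑ m, lam m) :=
  rzf_snr_lt_mf_general M lam hlam hne
end

section
/- (Theorem 1.) Let M ≥ 2, let λ_1, …, λ_M be positive real numbers, not all equal (the squared norms of the orthogonally selected channel vectors), let P > 0, σ^2 > 0 and e^2 > 0, and define the average SNR of regularized zero-forcing beamforming with regularizing factor α as SNR(α) = (P / (M(e^2 P + σ^2))) · (∑_{m=1}^M λ_m^2/(λ_m+α)^2) / (∑_{m=1}^M λ_m/(λ_m+α)^2). With α_ZF = 0, α_RZF = M σ^2 / P, α_RRZF = M(σ^2/P + e^2), and SNR_MF = (P / (M(e^2 P + σ^2))) · (∑_{m=1}^M λ_m^2)/(∑_{m=1}^M λ_m) the matched-filter value (the limit of SNR(α) as α → ∞), one has the strict chain SNR(α_ZF) < SNR(α_RZF) < SNR(α_RRZF) < SNR_MF. -/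
open Finset

/-!
Up to the common factor `P / (M (e² P + σ²))`, `SNR(α)` is the mean of the `λ_m` under the
weights `λ_m / (λ_m + α)²`, and the matched-filter value is their mean under the weights `λ_m`.
Going from `α = a` to `α = b > a` multiplies the weights by `((λ + a) / (λ + b))²`, and going
to the matched filter multiplies them by `(λ + α)²`; both factors increase strictly with `λ`.
Reweighting by such a factor strictly raises the mean of a non-constant `λ`, by the weighted
Chebyshev identity `2 (∑ w u l · ∑ w - ∑ w u · ∑ w l) = ∑ᵢ ∑ⱼ wᵢ wⱼ (lᵢ - lⱼ)(uᵢ - uⱼ)`.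
-/

/-- Average per-user SNR of RZF beamforming with regularizing factor `α`
over orthogonal channels with squared channel norms `lam`, transmit power
`P`, noise variance `σ2` and CSI-error power `e2`. -/
noncomputable def rzfSnr (M : ℕ) (lam : Fin M → ℝ) (P σ2 e2 : ℝ) (α : ℝ) : ℝ :=
  (P / (M * (e2 * P + σ2))) *
    ((∑ m, (lam m) ^ 2 / (lam m + α) ^ 2) / (∑ m, lam m / (lam m + α) ^ 2))

section WeightedMean

variable {ι : Type*} [Fintype ι]

theorem weighted_chebyshev_identity (w u l : ι → ℝ) :
    2 * ((∑ i, w i * u i * l i) * (∑ i, w i) - (∑ i, w i * u i) * (∑ i, w i * l i))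
      = ∑ i, ∑ j, w i * w j * ((l i - l j) * (u i - u j)) := by
  have half : ∑ i, ∑ j, w i * w j * (l i - l j) * u i
      = (∑ i, w i * u i * l i) * (∑ i, w i) - (∑ i, w i * u i) * (∑ i, w i * l i) := by
    simp only [sum_mul_sum, ← sum_sub_distrib]
    exact sum_congr rfl fun i _ => sum_congr rfl fun j _ => by ring
  have swap : ∑ i, ∑ j, w i * w j * (l j - l i) * u j
      = ∑ i, ∑ j, w i * w j * (l i - l j) * u i := by
    rw [sum_comm]; exact sum_congr rfl fun i _ => sum_congr rfl fun j _ => by ring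
  rw [← half, two_mul]
  nth_rw 2 [← swap]
  simp only [← sum_add_distrib]
  exact sum_congr rfl fun i _ => sum_congr rfl fun j _ => by ring

noncomputable def weightedMean (w l : ι → ℝ) : ℝ := (∑ i, w i * l i) / ∑ i, w i

theorem sum_sq_div_sum_eq_weightedMean (l : ι → ℝ) :
    (∑ i, l i ^ 2) / (∑ i, l i) = weightedMean l l := by
  simp only [weightedMean, sq]

theorem weightedMean_lt_weightedMean_mul {w u l : ι → ℝ} (hw : ∀ i, 0 < w i)
    (hu : ∀ i, 0 < u i) (hmono : ∀ i j, l i < l j → u i < u j) (hne : ∃ i j, l i ≠ l j) :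
    weightedMean w l < weightedMean (fun i => w i * u i) l := by
  obtain ⟨i₀, j₀, hij⟩ := hne
  have hcov : ∀ i j, 0 ≤ (l i - l j) * (u i - u j) := fun i j => by
    rcases lt_trichotomy (l i) (l j) with h | h | h
    · nlinarith [hmono i j h]
    · simp [h]
    · nlinarith [hmono j i h]
  have hcov₀ : 0 < (l i₀ - l j₀) * (u i₀ - u j₀) := by
    rcases hij.lt_or_gt with h | h
    · nlinarith [hmono i₀ j₀ h]
    · nlinarith [hmono j₀ i₀ h]
  have hterm : ∀ i j, 0 ≤ w i * w j * ((l i - l j) * (u i - u j)) := fun i j =>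
    mul_nonneg (mul_pos (hw i) (hw j)).le (hcov i j)
  have hdouble : 0 < ∑ i, ∑ j, w i * w j * ((l i - l j) * (u i - u j)) :=
    sum_pos' (fun i _ => sum_nonneg fun j _ => hterm i j)
      ⟨i₀, mem_univ _, sum_pos' (fun j _ => hterm i₀ j)
        ⟨j₀, mem_univ _, mul_pos (mul_pos (hw i₀) (hw j₀)) hcov₀⟩⟩
  have hW : 0 < ∑ i, w i := sum_pos (fun i _ => hw i) ⟨i₀, mem_univ _⟩
  have hWu : 0 < ∑ i, w i * u i := sum_pos (fun i _ => mul_pos (hw i) (hu i)) ⟨i₀, mem_univ _⟩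
  rw [weightedMean, weightedMean, div_lt_div_iff₀ hW hWu]
  nlinarith [weighted_chebyshev_identity w u l]

end WeightedMean

noncomputable def rzfWeight (α x : ℝ) : ℝ := x / (x + α) ^ 2

theorem rzfWeight_pos {α x : ℝ} (hα : 0 ≤ α) (hx : 0 < x) : 0 < rzfWeight α x := by
  unfold rzfWeight; positivity

theorem rzfSnr_eq_weightedMean (M : ℕ) (lam : Fin M → ℝ) (P σ2 e2 α : ℝ) :
    rzfSnr M lam P σ2 e2 α
      = P / (M * (e2 * P + σ2)) * weightedMean (fun m => rzfWeight α (lam m)) lam := by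
  unfold rzfSnr weightedMean rzfWeight
  congr 2
  exact sum_congr rfl fun m _ => by ring

section RzfWeight

variable {ι : Type*} [Fintype ι] {lam : ι → ℝ}

theorem weightedMean_rzfWeight_lt (hlam : ∀ m, 0 < lam m) (hne : ∃ i j, lam i ≠ lam j)
    {a b : ℝ} (ha : 0 ≤ a) (hab : a < b) :
    weightedMean (fun m => rzfWeight a (lam m)) lam
      < weightedMean (fun m => rzfWeight b (lam m)) lam := by
  have hb : 0 ≤ b := ha.trans hab.le
  have htilt : (fun m => rzfWeight b (lam m))
      = fun m => rzfWeight a (lam m) * ((lam m + a) / (lam m + b)) ^ 2 := by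
    funext m
    have := hlam m
    unfold rzfWeight
    field_simp
  rw [htilt]
  refine weightedMean_lt_weightedMean_mul (fun m => rzfWeight_pos ha (hlam m))
    (fun m => by have := hlam m; positivity) (fun i j hij => ?_) hne
  have hi := hlam i
  have hj := hlam j
  have hfrac : (lam i + a) / (lam i + b) < (lam j + a) / (lam j + b) := by
    rw [div_lt_div_iff₀ (by linarith) (by linarith)]; nlinarith
  exact pow_lt_pow_left₀ hfrac (by positivity) two_ne_zero

theorem weightedMean_rzfWeight_lt_weightedMean_self (hlam : ∀ m, 0 < lam m)
    (hne : ∃ i j, lam i ≠ lam j) {c : ℝ} (hc : 0 < c) :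
    weightedMean (fun m => rzfWeight c (lam m)) lam < weightedMean lam lam := by
  have htilt : (fun m => rzfWeight c (lam m) * (lam m + c) ^ 2) = lam := by
    funext m
    have := hlam m
    unfold rzfWeight
    field_simp
  calc weightedMean (fun m => rzfWeight c (lam m)) lam
      < weightedMean (fun m => rzfWeight c (lam m) * (lam m + c) ^ 2) lam := by
        refine weightedMean_lt_weightedMean_mul (fun m => rzfWeight_pos hc.le (hlam m))
          (fun m => by have := hlam m; positivity) (fun i j hij => ?_) hne
        have := hlam i
        exact pow_lt_pow_left₀ (by linarith) (by linarith) two_ne_zero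
    _ = weightedMean lam lam := by rw [htilt]

end RzfWeight

theorem snr_chain_general (M : ℕ) (lam : Fin M → ℝ)
    (hlam : ∀ m, 0 < lam m) (hne : ∃ i j, lam i ≠ lam j)
    (P σ2 e2 : ℝ) (hP : 0 < P) (hσ2 : 0 < σ2) (he2 : 0 < e2) :
    rzfSnr M lam P σ2 e2 0 < rzfSnr M lam P σ2 e2 (M * σ2 / P) ∧
    rzfSnr M lam P σ2 e2 (M * σ2 / P)
      < rzfSnr M lam P σ2 e2 (M * (σ2 / P + e2)) ∧
    rzfSnr M lam P σ2 e2 (M * (σ2 / P + e2))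
      < (P / (M * (e2 * P + σ2))) * ((∑ m, (lam m) ^ 2) / (∑ m, lam m)) := by
  have hM : (0 : ℝ) < M := by
    obtain ⟨i, -⟩ := hne
    exact_mod_cast i.pos
  have hscale : 0 < P / (M * (e2 * P + σ2)) := by positivity
  have hα_rzf : 0 < M * σ2 / P := by positivity
  have hα_rrzf : M * σ2 / P < M * (σ2 / P + e2) := by
    rw [mul_add, mul_div_assoc]
    exact lt_add_of_pos_right _ (mul_pos hM he2)
  simp only [rzfSnr_eq_weightedMean, sum_sq_div_sum_eq_weightedMean]
  exact ⟨mul_lt_mul_of_pos_left (weightedMean_rzfWeight_lt hlam hne le_rfl hα_rzf) hscale,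
    mul_lt_mul_of_pos_left (weightedMean_rzfWeight_lt hlam hne hα_rzf.le hα_rrzf) hscale,
    mul_lt_mul_of_pos_left
      (weightedMean_rzfWeight_lt_weightedMean_self hlam hne (hα_rzf.trans hα_rrzf)) hscale⟩

/-- Theorem 1: SNR_ZF < SNR_RZF < SNR_RRZF < SNR_MF. -/
theorem snr_chain (M : ℕ) (hM : 2 ≤ M) (lam : Fin M → ℝ)
    (hlam : ∀ m, 0 < lam m) (hne : ∃ i j, lam i ≠ lam j)
    (P σ2 e2 : ℝ) (hP : 0 < P) (hσ2 : 0 < σ2) (he2 : 0 < e2) :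
    rzfSnr M lam P σ2 e2 0 < rzfSnr M lam P σ2 e2 (M * σ2 / P) ∧
    rzfSnr M lam P σ2 e2 (M * σ2 / P)
      < rzfSnr M lam P σ2 e2 (M * (σ2 / P + e2)) ∧
    rzfSnr M lam P σ2 e2 (M * (σ2 / P + e2))
      < (P / (M * (e2 * P + σ2))) * ((∑ m, (lam m) ^ 2) / (∑ m, lam m)) :=
  snr_chain_general M lam hlam hne P σ2 e2 hP hσ2 he2
end

section
/- Let M ≥ 1 and let A be an M × M Hermitian positive definite complex matrix with at least two distinct eigenvalues. Define g(α) = tr( (A (A + α I)^{-1})^2 ) / tr( A (A + α I)^{-2} ) for real α ≥ 0. Then g is strictly monotonically increasing on [0, ∞). -/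
open Matrix
open scoped ComplexOrder

private lemma conj_mul_conj {M : ℕ} {U : Matrix (Fin M) (Fin M) ℂ}
    (hU : star U * U = 1) (D E : Matrix (Fin M) (Fin M) ℂ) :
    (U * D * star U) * (U * E * star U) = U * (D * E) * star U := by
  simp only [Matrix.mul_assoc]
  rw [← Matrix.mul_assoc (star U) U (E * star U), hU, Matrix.one_mul]

private lemma trace_formulas {M : ℕ} (A : Matrix (Fin M) (Fin M) ℂ) (hA : A.PosDef)
    (γ : ℝ) (hγ : 0 ≤ γ) :
    (Matrix.trace ((A * (A + (γ : ℂ) • 1)⁻¹) ^ 2)).re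
        = ∑ i, (hA.1.eigenvalues i)^2 / (hA.1.eigenvalues i + γ)^2 ∧
    (Matrix.trace (A * ((A + (γ : ℂ) • 1)⁻¹) ^ 2)).re
        = ∑ i, (hA.1.eigenvalues i) / (hA.1.eigenvalues i + γ)^2 := by
  set U : Matrix (Fin M) (Fin M) ℂ := (hA.1.eigenvectorUnitary : Matrix (Fin M) (Fin M) ℂ)
    with hUdef
  set lam : Fin M → ℝ := hA.1.eigenvalues with hlam
  have hU1 : U * star U = 1 := (Matrix.mem_unitaryGroup_iff).mp hA.1.eigenvectorUnitary.2
  have hU2 : star U * U = 1 := (Matrix.mem_unitaryGroup_iff').mp hA.1.eigenvectorUnitary.2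
  have hpos : ∀ i, 0 < lam i := hA.eigenvalues_pos
  have hposγ : ∀ i, 0 < lam i + γ := fun i => add_pos_of_pos_of_nonneg (hpos i) hγ
  have hne : ∀ i, ((lam i + γ : ℝ) : ℂ) ≠ 0 := fun i => by
    exact_mod_cast (hposγ i).ne'
  have hspec : A = U * diagonal (fun i => ((lam i : ℝ) : ℂ)) * star U := hA.1.spectral_theorem
  have hAγ : A + (γ : ℂ) • 1 = U * diagonal (fun i => ((lam i + γ : ℝ) : ℂ)) * star U := by
    have h1 : ((γ : ℂ) • 1 : Matrix (Fin M) (Fin M) ℂ) = U * ((γ : ℂ) • 1) * star U := by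
      rw [Matrix.mul_smul, Matrix.mul_one, Matrix.smul_mul, hU1]
    conv_lhs => rw [hspec, h1]
    rw [← Matrix.add_mul, ← Matrix.mul_add]
    congr 2
    have : ((γ : ℂ) • 1 : Matrix (Fin M) (Fin M) ℂ) = diagonal (fun _ => (γ : ℂ)) := by
      ext i j
      by_cases h : i = j <;> simp [Matrix.diagonal_apply, Matrix.one_apply, h]
    rw [this, Matrix.diagonal_add]
    congr 1
    funext i
    push_cast
    ring
  have hinv : (A + (γ : ℂ) • 1)⁻¹
      = U * diagonal (fun i => ((lam i + γ : ℝ) : ℂ)⁻¹) * star U := by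
    apply Matrix.inv_eq_right_inv
    rw [hAγ, conj_mul_conj hU2, Matrix.diagonal_mul_diagonal]
    have : (fun i => ((lam i + γ : ℝ) : ℂ) * ((lam i + γ : ℝ) : ℂ)⁻¹)
        = fun _ => (1 : ℂ) := funext fun i => mul_inv_cancel₀ (hne i)
    rw [this, Matrix.diagonal_one, Matrix.mul_one, hU1]
  have htr : ∀ v : Fin M → ℂ, Matrix.trace (U * diagonal v * star U) = ∑ i, v i := by
    intro v
    rw [Matrix.trace_mul_cycle, hU2, Matrix.one_mul, Matrix.trace_diagonal]
  constructor
  · have h1 : A * (A + (γ : ℂ) • 1)⁻¹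
        = U * diagonal (fun i => ((lam i : ℝ) : ℂ) * ((lam i + γ : ℝ) : ℂ)⁻¹) * star U := by
      rw [hinv]
      conv_lhs => rw [hspec]
      rw [conj_mul_conj hU2, Matrix.diagonal_mul_diagonal]
    rw [sq, h1, conj_mul_conj hU2, Matrix.diagonal_mul_diagonal, htr, Complex.re_sum]
    refine Finset.sum_congr rfl fun i _ => ?_
    have : ((lam i : ℝ) : ℂ) * ((lam i + γ : ℝ) : ℂ)⁻¹
          * (((lam i : ℝ) : ℂ) * ((lam i + γ : ℝ) : ℂ)⁻¹)
        = (((lam i)^2 / (lam i + γ)^2 : ℝ) : ℂ) := by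
      have hz : ((lam i : ℝ) : ℂ) + (γ : ℂ) ≠ 0 := by exact_mod_cast (hposγ i).ne'
      push_cast
      field_simp
    rw [this, Complex.ofReal_re]
  · have h1 : A * ((A + (γ : ℂ) • 1)⁻¹) ^ 2
        = U * diagonal (fun i =>
            ((lam i : ℝ) : ℂ) * (((lam i + γ : ℝ) : ℂ)⁻¹ * ((lam i + γ : ℝ) : ℂ)⁻¹)) * star U := by
      rw [sq, hinv, conj_mul_conj hU2, Matrix.diagonal_mul_diagonal]
      conv_lhs => rw [hspec]
      rw [conj_mul_conj hU2, Matrix.diagonal_mul_diagonal]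
    rw [h1, htr, Complex.re_sum]
    refine Finset.sum_congr rfl fun i _ => ?_
    have : ((lam i : ℝ) : ℂ) * (((lam i + γ : ℝ) : ℂ)⁻¹ * ((lam i + γ : ℝ) : ℂ)⁻¹)
        = (((lam i) / (lam i + γ)^2 : ℝ) : ℂ) := by
      have hz : ((lam i : ℝ) : ℂ) + (γ : ℂ) ≠ 0 := by exact_mod_cast (hposγ i).ne'
      push_cast
      field_simp
    rw [this, Complex.ofReal_re]

private lemma pair_key (p q α β : ℝ) (hp : 0 < p) (hq : 0 < q) (hα : 0 ≤ α) (hab : α < β) :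
    p^2/(p+β)^2*(q/(q+α)^2) + q^2/(q+β)^2*(p/(p+α)^2)
      - (p^2/(p+α)^2*(q/(q+β)^2) + q^2/(q+α)^2*(p/(p+β)^2))
    = p*q*(p-q)^2*(β-α)*((p+α)*(q+β)+(q+α)*(p+β))
        / (((p+α)*(p+β)*(q+α)*(q+β))^2) := by
  have hβ : 0 ≤ β := hα.trans hab.le
  have h1 : p + α ≠ 0 := (add_pos_of_pos_of_nonneg hp hα).ne'
  have h2 : p + β ≠ 0 := (add_pos_of_pos_of_nonneg hp hβ).ne'
  have h3 : q + α ≠ 0 := (add_pos_of_pos_of_nonneg hq hα).ne'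
  have h4 : q + β ≠ 0 := (add_pos_of_pos_of_nonneg hq hβ).ne'
  field_simp
  ring

private lemma pair_le (p q α β : ℝ) (hp : 0 < p) (hq : 0 < q) (hα : 0 ≤ α) (hab : α < β) :
    p^2/(p+α)^2*(q/(q+β)^2) + q^2/(q+α)^2*(p/(p+β)^2)
      ≤ p^2/(p+β)^2*(q/(q+α)^2) + q^2/(q+β)^2*(p/(p+α)^2) := by
  have hβ : 0 ≤ β := hα.trans hab.le
  have key := pair_key p q α β hp hq hα hab
  have h0 : (0:ℝ) ≤ p*q*(p-q)^2*(β-α)*((p+α)*(q+β)+(q+α)*(p+β))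
      / (((p+α)*(p+β)*(q+α)*(q+β))^2) := by
    have hba : 0 ≤ β - α := by linarith
    have d1 : 0 < p + α := add_pos_of_pos_of_nonneg hp hα
    have d2 : 0 < p + β := add_pos_of_pos_of_nonneg hp hβ
    have d3 : 0 < q + α := add_pos_of_pos_of_nonneg hq hα
    have d4 : 0 < q + β := add_pos_of_pos_of_nonneg hq hβ
    positivity
  linarith [key ▸ h0]

private lemma pair_lt (p q α β : ℝ) (hp : 0 < p) (hq : 0 < q) (hα : 0 ≤ α) (hab : α < β)
    (hpq : p ≠ q) :
    p^2/(p+α)^2*(q/(q+β)^2) + q^2/(q+α)^2*(p/(p+β)^2)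
      < p^2/(p+β)^2*(q/(q+α)^2) + q^2/(q+β)^2*(p/(p+α)^2) := by
  have hβ : 0 ≤ β := hα.trans hab.le
  have key := pair_key p q α β hp hq hα hab
  have h0 : (0:ℝ) < p*q*(p-q)^2*(β-α)*((p+α)*(q+β)+(q+α)*(p+β))
      / (((p+α)*(p+β)*(q+α)*(q+β))^2) := by
    have hba : 0 < β - α := by linarith
    have hpq' : p - q ≠ 0 := sub_ne_zero.mpr hpq
    have d1 : 0 < p + α := add_pos_of_pos_of_nonneg hp hα
    have d2 : 0 < p + β := add_pos_of_pos_of_nonneg hp hβ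
    have d3 : 0 < q + α := add_pos_of_pos_of_nonneg hq hα
    have d4 : 0 < q + β := add_pos_of_pos_of_nonneg hq hβ
    positivity
  linarith [key ▸ h0]

private lemma ratio_lt {M : ℕ} (hM : 1 ≤ M) (lam : Fin M → ℝ) (hpos : ∀ i, 0 < lam i)
    (hdist : ∃ i j, lam i ≠ lam j) {α β : ℝ} (hα : 0 ≤ α) (hab : α < β) :
    (∑ i, (lam i)^2/(lam i+α)^2) / (∑ i, lam i/(lam i+α)^2)
      < (∑ i, (lam i)^2/(lam i+β)^2) / (∑ i, lam i/(lam i+β)^2) := by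
  have hβ : 0 ≤ β := hα.trans hab.le
  haveI : Nonempty (Fin M) := Fin.pos_iff_nonempty.mp hM
  have hsum_pos : ∀ γ : ℝ, 0 ≤ γ → 0 < ∑ i, lam i/(lam i+γ)^2 := by
    intro γ hγ
    refine Finset.sum_pos (fun i _ => ?_) Finset.univ_nonempty
    exact div_pos (hpos i) (pow_pos (add_pos_of_pos_of_nonneg (hpos i) hγ) 2)
  rw [div_lt_div_iff₀ (hsum_pos α hα) (hsum_pos β hβ)]
  rw [Finset.sum_mul_sum, Finset.sum_mul_sum]
  set D : Fin M → Fin M → ℝ := fun i j =>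
    (lam i)^2/(lam i+β)^2 * (lam j/(lam j+α)^2)
      - (lam i)^2/(lam i+α)^2 * (lam j/(lam j+β)^2) with hD
  have hswap : ∑ i, ∑ j, D j i = ∑ i, ∑ j, D i j := Finset.sum_comm
  have hsub : ∀ x y : ℝ,
      ∑ i, ∑ j, ((lam i)^2/(lam i+x)^2 * (lam j/(lam j+y)^2)) =
        (∑ i, ∑ j, ((lam i)^2/(lam i+x)^2 * (lam j/(lam j+y)^2))) := fun _ _ => rfl
  have hDsum : ∑ i, ∑ j, D i j
      = (∑ i, ∑ j, (lam i)^2/(lam i+β)^2 * (lam j/(lam j+α)^2))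
        - ∑ i, ∑ j, (lam i)^2/(lam i+α)^2 * (lam j/(lam j+β)^2) := by
    simp [hD, Finset.sum_sub_distrib]
  have hpair : ∀ i j, 0 ≤ D i j + D j i := by
    intro i j
    have := pair_le (lam i) (lam j) α β (hpos i) (hpos j) hα hab
    simp only [hD]
    linarith
  have hpairlt : ∃ i j, 0 < D i j + D j i := by
    obtain ⟨i, j, hij⟩ := hdist
    exact ⟨i, j, by
      have := pair_lt (lam i) (lam j) α β (hpos i) (hpos j) hα hab hij
      simp only [hD]
      linarith⟩
  have hsum2 : 0 < ∑ i, ∑ j, (D i j + D j i) := by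
    obtain ⟨i0, j0, h0⟩ := hpairlt
    refine Finset.sum_pos' (fun i _ => Finset.sum_nonneg fun j _ => hpair i j)
      ⟨i0, Finset.mem_univ i0, ?_⟩
    exact Finset.sum_pos' (fun j _ => hpair i0 j) ⟨j0, Finset.mem_univ j0, h0⟩
  have hsplit : ∑ i, ∑ j, (D i j + D j i)
      = (∑ i, ∑ j, D i j) + ∑ i, ∑ j, D j i := by
    simp [Finset.sum_add_distrib]
  rw [hsplit, hswap] at hsum2
  linarith [hDsum ▸ (by linarith : (0:ℝ) < ∑ i, ∑ j, D i j)]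

/-- for a Hermitian positive definite matrix `A` with at least
two distinct eigenvalues, the trace ratio
`tr((A(A+αI)⁻¹)²) / tr(A(A+αI)⁻²)` is strictly increasing on `[0, ∞)`. -/
theorem trace_ratio_strictMono (M : ℕ) (hM : 1 ≤ M)
    (A : Matrix (Fin M) (Fin M) ℂ) (hA : A.PosDef)
    (hdist : ∃ i j, hA.1.eigenvalues i ≠ hA.1.eigenvalues j) :
    StrictMonoOn
      (fun α : ℝ =>
        (Matrix.trace ((A * (A + (α : ℂ) • 1)⁻¹) ^ 2)).re /
          (Matrix.trace (A * ((A + (α : ℂ) • 1)⁻¹) ^ 2)).re)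
      (Set.Ici 0) := by
  intro a ha b hb hab
  simp only
  rw [(trace_formulas A hA a ha).1, (trace_formulas A hA a ha).2,
    (trace_formulas A hA b hb).1, (trace_formulas A hA b hb).2]
  exact ratio_lt hM hA.1.eigenvalues hA.eigenvalues_pos hdist ha hab
end
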